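/- arXiv:1712.08558 — 2 statements merged into one kernel-verified Lean document; each statement's English description precedes it below -/
import Mathlib

section
/- Let K ⊂ R^n be a symmetric convex body of volume 1. Then the function f(s) = Pr[x + s·y ∈ K], where x is uniform on K and y is a standard Gaussian N(0, I_n/n) independent of x, is non-increasing in s on [0, ∞). -/
open MeasureTheory ProbabilityTheory

/-!
If `x` and `x + t • y` lie in `K` and `0 ≤ s ≤ t`, then both `x + ((t - s) / 2) • y` and
`x + ((t + s) / 2) • y` lie on the segment between them. So the translation by
`((t - s) / 2) • y` maps the slice `{x ∈ K | x + t • y ∈ K}` into `{x ∈ K | x + s • y ∈ K}`,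
and by translation invariance of Lebesgue measure the volume of the slice is antitone in `t`
for each fixed `y`. Integrating over `y` gives the theorem.
-/

section Convex

variable {E : Type*} [AddCommGroup E] [Module ℝ E] {K : Set E}

theorem Convex.add_smul_mem_of_le {x y : E} {t : ℝ} (hK : Convex ℝ K) (hx : x ∈ K)
    (hxy : x + t • y ∈ K) {r : ℝ} (hr : 0 ≤ r) (hrt : r ≤ t) : x + r • y ∈ K := by
  rcases hr.eq_or_lt with rfl | hr
  · simpa using hx
  have ht : 0 < t := hr.trans_le hrt
  have hmem := hK.add_smul_mem hx hxy (t := r / t) ⟨by positivity, div_le_one_of_le₀ hrt ht.le⟩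
  rwa [smul_smul, div_mul_cancel₀ r ht.ne'] at hmem

theorem Convex.inter_add_smul_subset_preimage {y : E} (hK : Convex ℝ K) {s t : ℝ}
    (hs : 0 ≤ s) (hst : s ≤ t) :
    {x | x ∈ K ∧ x + t • y ∈ K} ⊆
      (· + ((t - s) / 2) • y) ⁻¹' {x | x ∈ K ∧ x + s • y ∈ K} := by
  rintro x ⟨hx, hxt⟩
  refine ⟨hK.add_smul_mem_of_le hx hxt (by linarith) (by linarith), ?_⟩
  have hmem := hK.add_smul_mem_of_le hx hxt (r := (t + s) / 2) (by linarith) (by linarith)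
  convert hmem using 1
  module

variable [MeasurableSpace E]

theorem Convex.antitoneOn_measure_inter_add_smul_mem [MeasurableAdd E] (hK : Convex ℝ K)
    (μ : Measure E) [μ.IsAddRightInvariant] (y : E) :
    AntitoneOn (fun s : ℝ => μ {x | x ∈ K ∧ x + s • y ∈ K}) (Set.Ici 0) := by
  intro s hs t _ hst
  calc μ {x | x ∈ K ∧ x + t • y ∈ K}
      ≤ μ ((· + ((t - s) / 2) • y) ⁻¹' {x | x ∈ K ∧ x + s • y ∈ K}) :=
        measure_mono (hK.inter_add_smul_subset_preimage hs hst)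
    _ = μ {x | x ∈ K ∧ x + s • y ∈ K} := measure_preimage_add_right μ _ _

theorem Convex.antitoneOn_prod_measure_add_smul_mem [MeasurableAdd₂ E]
    [MeasurableConstSMul ℝ E] (hK : Convex ℝ K) (hKm : MeasurableSet K)
    (μ ν : Measure E) [SFinite μ] [μ.IsAddRightInvariant] [SFinite ν] :
    AntitoneOn (fun s : ℝ => (μ.restrict K).prod ν {p : E × E | p.1 + s • p.2 ∈ K})
      (Set.Ici 0) := by
  have hmeas (s : ℝ) : MeasurableSet {p : E × E | p.1 + s • p.2 ∈ K} :=
    (measurable_fst.add (measurable_snd.const_smul s)) hKm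
  have hslice (s : ℝ) (y : E) :
      μ.restrict K {x | x + s • y ∈ K} = μ {x | x ∈ K ∧ x + s • y ∈ K} := by
    rw [Measure.restrict_apply' hKm, Set.inter_comm]
    rfl
  intro s hs t ht hst
  simp only [Measure.prod_apply_symm (hmeas _)]
  exact lintegral_mono fun y => by
    simpa only [Set.preimage_ofPred_eq, hslice] using
      hK.antitoneOn_measure_inter_add_smul_mem μ y hs ht hst

end Convex

theorem stmt3_general (n : ℕ) (K : Set (EuclideanSpace ℝ (Fin n)))
    (hconv : Convex ℝ K) (hcomp : IsCompact K)
    (γ : Measure (EuclideanSpace ℝ (Fin n)))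
    (hγ : γ = ((Measure.pi fun _ : Fin n => gaussianReal 0 (n : NNReal)⁻¹).map
      (MeasurableEquiv.toLp 2 (Fin n → ℝ)) :
      Measure (EuclideanSpace ℝ (Fin n)))) :
    AntitoneOn
      (fun s : ℝ =>
        (((volume.restrict K).prod γ)
          {p : EuclideanSpace ℝ (Fin n) × EuclideanSpace ℝ (Fin n) |
            p.1 + s • p.2 ∈ K}).toReal)
      (Set.Ici 0) := by
  subst hγ
  have : IsFiniteMeasure (volume.restrict K) :=
    isFiniteMeasure_restrict.2 hcomp.measure_lt_top.ne
  intro s hs t ht hst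
  exact ENNReal.toReal_mono (measure_ne_top _ _)
    (hconv.antitoneOn_prod_measure_add_smul_mem hcomp.isClosed.measurableSet volume _ hs ht hst)

/-- For a symmetric convex body `K ⊂ ℝ^n` of volume `1`, the function
`f(s) = Pr[x + s·y ∈ K]`, with `x` uniform on `K` and `y ~ N(0, I_n/n)` independent,
is non-increasing on `[0, ∞)`. -/
theorem stmt3 (n : ℕ) (hn : 0 < n) (K : Set (EuclideanSpace ℝ (Fin n)))
    (hconv : Convex ℝ K) (hcomp : IsCompact K) (hint : (interior K).Nonempty)
    (hsym : K = -K) (hvol : volume K = 1)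
    (γ : Measure (EuclideanSpace ℝ (Fin n)))
    (hγ : γ = ((Measure.pi fun _ : Fin n => gaussianReal 0 (n : NNReal)⁻¹).map
      (MeasurableEquiv.toLp 2 (Fin n → ℝ)) :
      Measure (EuclideanSpace ℝ (Fin n)))) :
    AntitoneOn
      (fun s : ℝ =>
        (((volume.restrict K).prod γ)
          {p : EuclideanSpace ℝ (Fin n) × EuclideanSpace ℝ (Fin n) |
            p.1 + s • p.2 ∈ K}).toReal)
      (Set.Ici 0) :=
  stmt3_general n K hconv hcomp γ hγ
end

section
/- Let L ⊂ R^k be a full-rank lattice with det(L) = 1, let V_L be its Voronoi cell, and let h_{M,t}(a) = CV_L(Ma + t) where M ∈ R^{k×d} has i.i.d. N(0, 1/k) entries and t is uniform on V_L. Then for any a, b ∈ R^d with ||a - b|| = Δ, Pr_{M,t}[h(a) = h(b)] = Pr_{x ← Unif(V_L), y ← N(0, Δ²I_k/k)}[x + y ∈ V_L]. -/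
open MeasureTheory ProbabilityTheory Metric Real
open scoped NNReal ENNReal RealInnerProductSpace


lemma pdf_conv (v w : ℝ≥0) (hv : v ≠ 0) (hw : w ≠ 0) (z x : ℝ) :
    gaussianPDFReal 0 v x * gaussianPDFReal 0 w (z - x) =
    gaussianPDFReal 0 (v + w) z *
      gaussianPDFReal ((v : ℝ) * z / ((v : ℝ) + (w : ℝ))) (v * w / (v + w)) x := by
  have hv' : (0:ℝ) < v := lt_of_le_of_ne (v.coe_nonneg) (by exact_mod_cast (Ne.symm hv))
  have hw' : (0:ℝ) < w := lt_of_le_of_ne (w.coe_nonneg) (by exact_mod_cast (Ne.symm hw))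
  have hvw : (0:ℝ) < (v:ℝ) + w := by linarith
  simp only [gaussianPDFReal_def, sub_zero, NNReal.coe_add, NNReal.coe_mul, NNReal.coe_div]
  have hc : (√(2 * π * (v:ℝ)))⁻¹ * (√(2 * π * (w:ℝ)))⁻¹
      = (√(2 * π * ((v:ℝ) + w)))⁻¹ * (√(2 * π * ((v:ℝ) * w / ((v:ℝ) + w))))⁻¹ := by
    rw [← mul_inv, ← mul_inv, ← Real.sqrt_mul (by positivity), ← Real.sqrt_mul (by positivity)]
    congr 1
    field_simp
  have he : Real.exp (-x ^ 2 / (2 * (v:ℝ))) * Real.exp (-(z - x) ^ 2 / (2 * (w:ℝ)))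
      = Real.exp (-z ^ 2 / (2 * ((v:ℝ) + w))) *
        Real.exp (-(x - (v:ℝ) * z / ((v:ℝ) + w)) ^ 2 / (2 * ((v:ℝ) * w / ((v:ℝ) + w)))) := by
    rw [← Real.exp_add, ← Real.exp_add]
    congr 1
    field_simp
    ring
  calc (√(2 * π * (v:ℝ)))⁻¹ * Real.exp (-x ^ 2 / (2 * (v:ℝ))) *
        ((√(2 * π * (w:ℝ)))⁻¹ * Real.exp (-(z - x) ^ 2 / (2 * (w:ℝ))))
      = ((√(2 * π * (v:ℝ)))⁻¹ * (√(2 * π * (w:ℝ)))⁻¹) *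
        (Real.exp (-x ^ 2 / (2 * (v:ℝ))) * Real.exp (-(z - x) ^ 2 / (2 * (w:ℝ)))) := by ring
    _ = _ := by rw [hc, he]; ring

lemma gaussianPDF_conv (v w : ℝ≥0) (hv : v ≠ 0) (hw : w ≠ 0) (z : ℝ) :
    ∫⁻ x, gaussianPDF 0 v x * gaussianPDF 0 w (z - x) = gaussianPDF 0 (v + w) z := by
  have hvw : (v * w / (v + w) : ℝ≥0) ≠ 0 := div_ne_zero (mul_ne_zero hv hw) (by simp [hv])
  have h1 : ∀ x : ℝ, gaussianPDF 0 v x * gaussianPDF 0 w (z - x)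
      = ENNReal.ofReal (gaussianPDFReal 0 (v + w) z) *
        ENNReal.ofReal (gaussianPDFReal ((v : ℝ) * z / ((v : ℝ) + (w : ℝ)))
          (v * w / (v + w)) x) := by
    intro x
    rw [gaussianPDF, gaussianPDF, ← ENNReal.ofReal_mul (gaussianPDFReal_nonneg _ _ _),
      pdf_conv v w hv hw z x,
      ENNReal.ofReal_mul (gaussianPDFReal_nonneg _ _ _)]
  simp only [h1]
  rw [lintegral_const_mul _ ((measurable_gaussianPDFReal _ _).ennreal_ofReal),
    lintegral_gaussianPDFReal_eq_one _ hvw, mul_one, gaussianPDF]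


lemma gauss_sum (v w : ℝ≥0) :
    ((gaussianReal 0 v).prod (gaussianReal 0 w)).map (fun p : ℝ × ℝ => p.1 + p.2)
      = gaussianReal 0 (v + w) := by
  rcases eq_or_ne v 0 with rfl | hv
  · rw [gaussianReal_zero_var, Measure.dirac_prod,
      Measure.map_map measurable_add measurable_prodMk_left]
    have : ((fun p : ℝ × ℝ => p.1 + p.2) ∘ Prod.mk 0) = fun y : ℝ => 0 + y := rfl
    rw [this, gaussianReal_map_const_add, zero_add, zero_add]
  rcases eq_or_ne w 0 with rfl | hw
  · rw [gaussianReal_zero_var, Measure.prod_dirac,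
      Measure.map_map measurable_add measurable_prodMk_right]
    have : ((fun p : ℝ × ℝ => p.1 + p.2) ∘ fun x : ℝ => (x, 0)) = fun x : ℝ => x + 0 := rfl
    rw [this, gaussianReal_map_add_const, add_zero, add_zero]
  have hvw : v + w ≠ 0 := by simp [hv]
  have hmw : Measurable (gaussianPDF 0 w) := measurable_gaussianPDF 0 w
  have hmv : Measurable (gaussianPDF 0 v) := measurable_gaussianPDF 0 v
  ext s hs
  have hadd : Measurable fun p : ℝ × ℝ => p.1 + p.2 := measurable_add
  have hindm : Measurable (s.indicator (fun _ => (1:ℝ≥0∞))) := measurable_one.indicator hs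
  -- measurability of the two-variable kernel
  have hF : Measurable (fun p : ℝ × ℝ =>
      s.indicator (fun _ => (1:ℝ≥0∞)) p.2 * (gaussianPDF 0 v p.1 * gaussianPDF 0 w (p.2 - p.1))) := by
    exact ((hindm.comp measurable_snd).mul
      ((hmv.comp measurable_fst).mul (hmw.comp (measurable_snd.sub measurable_fst))))
  have hind : ∀ x : ℝ, (gaussianReal 0 w) (Prod.mk x ⁻¹' ((fun p : ℝ × ℝ => p.1 + p.2) ⁻¹' s))
      = ∫⁻ z, s.indicator (fun _ => (1:ℝ≥0∞)) z * gaussianPDF 0 w (z - x) := by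
    intro x
    have hpre : Prod.mk x ⁻¹' ((fun p : ℝ × ℝ => p.1 + p.2) ⁻¹' s) = (fun y => x + y) ⁻¹' s := rfl
    rw [hpre, gaussianReal_of_var_ne_zero 0 hw,
      withDensity_apply _ ((measurable_const_add x) hs), ← lintegral_indicator ((measurable_const_add x) hs) _]
    have hpt : ∀ y : ℝ, ((fun y => x + y) ⁻¹' s).indicator (gaussianPDF 0 w) y
        = (fun z => s.indicator (fun _ => (1:ℝ≥0∞)) z * gaussianPDF 0 w (z - x)) (x + y) := by
      intro y
      by_cases h : x + y ∈ s <;>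
        simp [Set.indicator, h, add_sub_cancel_left]
    simp only [hpt]
    exact (lintegral_add_left_eq_self
      (fun z => s.indicator (fun _ => (1:ℝ≥0∞)) z * gaussianPDF 0 w (z - x)) x)
  have hg : Measurable fun x : ℝ => ∫⁻ z, s.indicator (fun _ => (1:ℝ≥0∞)) z * gaussianPDF 0 w (z - x) := by
    apply Measurable.lintegral_prod_right (f := fun x z =>
      s.indicator (fun _ => (1:ℝ≥0∞)) z * gaussianPDF 0 w (z - x))
    exact (hindm.comp measurable_snd).mul (hmw.comp (measurable_snd.sub measurable_fst))
  calc ((gaussianReal 0 v).prod (gaussianReal 0 w)).map (fun p : ℝ × ℝ => p.1 + p.2) s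
      = ∫⁻ x, (gaussianReal 0 w) (Prod.mk x ⁻¹' ((fun p : ℝ × ℝ => p.1 + p.2) ⁻¹' s))
          ∂(gaussianReal 0 v) := by
        rw [Measure.map_apply hadd hs, Measure.prod_apply (hadd hs)]
    _ = ∫⁻ x, (∫⁻ z, s.indicator (fun _ => (1:ℝ≥0∞)) z * gaussianPDF 0 w (z - x))
          ∂(gaussianReal 0 v) := by simp only [hind]
    _ = ∫⁻ x, gaussianPDF 0 v x *
          (∫⁻ z, s.indicator (fun _ => (1:ℝ≥0∞)) z * gaussianPDF 0 w (z - x)) := by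
        rw [gaussianReal_of_var_ne_zero 0 hv,
          lintegral_withDensity_eq_lintegral_mul _ hmv hg]
        rfl
    _ = ∫⁻ x, ∫⁻ z, s.indicator (fun _ => (1:ℝ≥0∞)) z *
          (gaussianPDF 0 v x * gaussianPDF 0 w (z - x)) := by
        congr 1; funext x
        have hm1 : Measurable fun z : ℝ => s.indicator (fun _ => (1:ℝ≥0∞)) z
            * gaussianPDF 0 w (z - x) := hindm.mul (hmw.comp (measurable_sub_const x))
        rw [← lintegral_const_mul (gaussianPDF 0 v x) hm1]
        congr 1; funext z; ring
    _ = ∫⁻ z, ∫⁻ x, s.indicator (fun _ => (1:ℝ≥0∞)) z *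
          (gaussianPDF 0 v x * gaussianPDF 0 w (z - x)) := by
        exact lintegral_lintegral_swap hF.aemeasurable
    _ = ∫⁻ z, s.indicator (fun _ => (1:ℝ≥0∞)) z * gaussianPDF 0 (v + w) z := by
        congr 1; funext z
        have hm2 : Measurable fun x : ℝ => gaussianPDF 0 v x * gaussianPDF 0 w (z - x) :=
          hmv.mul (hmw.comp (measurable_id.const_sub z))
        rw [lintegral_const_mul (s.indicator (fun _ => (1:ℝ≥0∞)) z) hm2,
          gaussianPDF_conv v w hv hw z]
    _ = gaussianReal 0 (v + w) s := by
        rw [gaussianReal_of_var_ne_zero 0 hvw, withDensity_apply _ hs,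
          ← lintegral_indicator hs _]
        congr 1; funext z
        by_cases h : z ∈ s <;> simp [Set.indicator, h]

lemma row_sum (n : ℕ) (c : Fin n → ℝ) (v : ℝ≥0) :
    (Measure.pi fun _ : Fin n => gaussianReal 0 v).map (fun r => ∑ j, c j * r j)
      = gaussianReal 0 ((∑ j, (c j)^2).toNNReal * v) := by
  induction n with
  | zero =>
      have h0 : (fun r : Fin 0 → ℝ => ∑ j, c j * r j) = fun _ => (0:ℝ) := by
        funext r; simp
      rw [h0, Measure.map_const, measure_univ, one_smul]
      simp [gaussianReal_zero_var]
  | succ n ih =>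
      set e := MeasurableEquiv.piFinSuccAbove (fun _ : Fin (n+1) => ℝ) 0 with he
      have hmp := measurePreserving_piFinSuccAbove (fun _ : Fin (n+1) => gaussianReal 0 v) 0
      have hpi : (Measure.pi fun _ : Fin (n+1) => gaussianReal 0 v)
          = ((gaussianReal 0 v).prod (Measure.pi fun _ : Fin n => gaussianReal 0 v)).map e.symm :=
        ((hmp.symm e).map_eq).symm
      have hsum : Measurable fun r : Fin (n+1) → ℝ => ∑ j, c j * r j :=
        Finset.measurable_sum Finset.univ
          (fun j _ => (by fun_prop : Measurable fun r : Fin (n+1) → ℝ => c j * r j))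
      rw [hpi, Measure.map_map hsum e.symm.measurable]
      have hcomp : ((fun r : Fin (n+1) → ℝ => ∑ j, c j * r j) ∘ e.symm)
          = fun p : ℝ × (Fin n → ℝ) => (c 0 * p.1) + ∑ j, c j.succ * p.2 j := by
        funext p
        obtain ⟨x, g⟩ := p
        simp only [Function.comp_apply, he, MeasurableEquiv.piFinSuccAbove_symm_apply,
          Fin.insertNthEquiv_apply]
        rw [Fin.insertNth_zero]
        simp [Fin.sum_univ_succ]
      rw [hcomp]
      have hφ : Measurable fun x : ℝ => c 0 * x := measurable_id.const_mul (c 0)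
      have hψ : Measurable fun g : Fin n → ℝ => ∑ j, c j.succ * g j :=
        Finset.measurable_sum Finset.univ
          (fun j _ => (by fun_prop : Measurable fun g : Fin n → ℝ => c j.succ * g j))
      have hsplit : (fun p : ℝ × (Fin n → ℝ) => (c 0 * p.1) + ∑ j, c j.succ * p.2 j)
          = (fun q : ℝ × ℝ => q.1 + q.2) ∘ (Prod.map (fun x => c 0 * x) (fun g => ∑ j, c j.succ * g j)) := rfl
      rw [hsplit, ← Measure.map_map measurable_add (hφ.prodMap hψ),
        ← Measure.map_prod_map _ _ hφ hψ, gaussianReal_map_const_mul, mul_zero, ih, gauss_sum]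
      congr 1
      have h1 : (NNReal.mk ((c 0)^2) (sq_nonneg _) : ℝ≥0) = ((c 0)^2).toNNReal := by
        ext; simp [Real.coe_toNNReal _ (sq_nonneg _)]
      rw [h1, ← add_mul]
      congr 1
      rw [← Real.toNNReal_add (sq_nonneg _) (Finset.sum_nonneg fun j _ => sq_nonneg _)]
      congr 1
      rw [Fin.sum_univ_succ]


variable {k : ℕ}

local notation "E" => EuclideanSpace ℝ (Fin k)

lemma norm_le_iff_inner (z v : E) : ‖z‖ ≤ ‖z - v‖ ↔ ⟪v, z⟫ ≤ ‖v‖^2 / 2 := by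
  rw [← pow_le_pow_iff_left₀ (norm_nonneg z) (norm_nonneg _) (two_ne_zero),
    norm_sub_sq_real]
  rw [real_inner_comm]
  constructor <;> intro h <;> nlinarith [sq_nonneg ‖v‖]

lemma norm_eq_inner {z u : E} (h : ‖z‖ = ‖z - u‖) : ⟪u, z⟫ = ‖u‖^2 / 2 := by
  have h2 : ‖z‖^2 = ‖z - u‖^2 := by rw [h]
  rw [norm_sub_sq_real, real_inner_comm] at h2
  nlinarith

lemma hyperplane_null {u : E} (hu : u ≠ 0) :
    volume {z : E | ‖z‖ = ‖z - u‖} = 0 := by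
  have hsub : {z : E | ‖z‖ = ‖z - u‖} ⊆ {z : E | ⟪u, z⟫ = ‖u‖^2 / 2} :=
    fun z hz => norm_eq_inner hz
  refine measure_mono_null hsub ?_
  set K : Submodule ℝ E := LinearMap.ker (innerSL ℝ u : E →ₗ[ℝ] ℝ) with hK
  have hKne : K ≠ ⊤ := by
    intro htop
    have : ⟪u, u⟫ = 0 := by
      have : u ∈ K := htop ▸ Submodule.mem_top
      simpa [hK, LinearMap.mem_ker] using this
    exact hu (inner_self_eq_zero.mp this)
  have hset : {z : E | ⟪u, z⟫ = ‖u‖^2 / 2}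
      = (fun z => (-((1/2 : ℝ) • u)) + z) ⁻¹' (K : Set E) := by
    ext z
    simp only [Set.mem_preimage, SetLike.mem_coe, hK, LinearMap.mem_ker, Set.mem_setOf_eq]
    rw [show ((innerSL ℝ u : E →ₗ[ℝ] ℝ) (-((1/2 : ℝ) • u) + z) : ℝ) = ⟪u, -((1/2 : ℝ) • u) + z⟫ from rfl]
    rw [inner_add_right, inner_neg_right, inner_smul_right, real_inner_self_eq_norm_sq]
    constructor <;> intro h <;> linarith
  rw [hset, measure_preimage_add]
  exact Measure.addHaar_submodule volume K hKne

lemma tie_null (L : AddSubgroup E) (VL : Set E)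
    (hVL : VL = {z : E | ∀ v ∈ L, ‖z‖ ≤ ‖z - v‖})
    {u : E} (huL : u ∈ L) (hu : u ≠ 0) :
    volume {z : E | z ∈ VL ∧ z - u ∈ VL} = 0 := by
  refine measure_mono_null (fun z hz => ?_) (hyperplane_null hu)
  obtain ⟨h1, h2⟩ := hz
  have hle : ‖z‖ ≤ ‖z - u‖ := by
    rw [hVL] at h1; exact h1 u huL
  have hge : ‖z - u‖ ≤ ‖z‖ := by
    rw [hVL] at h2
    have := h2 (-u) (neg_mem huL)
    simpa [sub_neg_eq_add] using this
  exact le_antisymm hle hge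

lemma VL_convex (L : AddSubgroup E) (VL : Set E)
    (hVL : VL = {z : E | ∀ v ∈ L, ‖z‖ ≤ ‖z - v‖}) : Convex ℝ VL := by
  have : VL = ⋂ v ∈ L, {z : E | ⟪v, z⟫ ≤ ‖v‖^2 / 2} := by
    rw [hVL]; ext z
    simp only [Set.mem_setOf_eq, Set.mem_iInter]
    exact ⟨fun h v hv => (norm_le_iff_inner z v).mp (h v hv),
      fun h v hv => (norm_le_iff_inner z v).mpr (h v hv)⟩
  rw [this]
  exact convex_iInter₂ fun v _ => convex_halfSpace_le
    ⟨fun x y => inner_add_right _ _ _, fun c x => real_inner_smul_right _ _ _⟩ _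

lemma VL_closed (L : AddSubgroup E) (VL : Set E)
    (hVL : VL = {z : E | ∀ v ∈ L, ‖z‖ ≤ ‖z - v‖}) : IsClosed VL := by
  have : VL = ⋂ v ∈ L, {z : E | ‖z‖ ≤ ‖z - v‖} := by
    rw [hVL]; ext z; simp [Set.mem_iInter]
  rw [this]
  exact isClosed_biInter fun v _ =>
    isClosed_le continuous_norm ((continuous_id.sub continuous_const).norm)

lemma L_countable (L : AddSubgroup E) (VL : Set E)
    (hVL : VL = {z : E | ∀ v ∈ L, ‖z‖ ≤ ‖z - v‖})
    (hvol : volume VL = 1) : (L : Set E).Countable := by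
  have hconv := VL_convex L VL hVL
  have hclosed := VL_closed L VL hVL
  have hfr : volume (frontier VL) = 0 := Convex.addHaar_frontier volume hconv
  have hint : volume (interior VL) = 1 := by
    have hiff : interior VL = VL \ frontier VL := by
      rw [hclosed.frontier_eq]
      ext z
      simp only [Set.mem_diff, Set.mem_diff, not_and, not_not]
      exact ⟨fun h => ⟨interior_subset h, fun _ => h⟩, fun ⟨h1, h2⟩ => h2 h1⟩
    rw [hiff, measure_diff_null hfr, hvol]
  set As : ↥L → Set E := fun v => (fun z => z - (v : E)) ⁻¹' (interior VL) with hAs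
  have hmeas : ∀ v : ↥L, MeasurableSet (As v) := fun v =>
    isOpen_interior.measurableSet.preimage (measurable_sub_const _)
  have hdisj : Pairwise (Function.onFun Disjoint As) := by
    intro v v' hne
    rw [Function.onFun, Set.disjoint_iff_inter_eq_empty]
    by_contra hne'
    obtain ⟨z, hz1, hz2⟩ := Set.inter_nonempty.mp (Set.nonempty_iff_ne_empty.mpr hne')
    have hopen : IsOpen (As v ∩ As v') := ((isOpen_interior.preimage
      (continuous_sub_right _)).inter (isOpen_interior.preimage (continuous_sub_right _)))
    have hpos : 0 < volume (As v ∩ As v') := hopen.measure_pos volume ⟨z, hz1, hz2⟩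
    have hu : (v' : E) - v ∈ L := sub_mem v'.2 v.2
    have hu0 : (v' : E) - v ≠ 0 :=
      sub_ne_zero.mpr fun h => hne (Subtype.ext h.symm)
    have hsub : As v ∩ As v' ⊆ (fun z => z - (v : E)) ⁻¹' {y : E | y ∈ VL ∧ y - ((v' : E) - v) ∈ VL} := by
      intro z ⟨h1, h2⟩
      refine ⟨interior_subset h1, ?_⟩
      have : z - (v : E) - ((v' : E) - v) = z - v' := by abel
      rw [this]
      exact interior_subset h2
    have : volume (As v ∩ As v') = 0 := by
      refine measure_mono_null hsub ?_
      have : (fun z : E => z - (v : E)) = (fun z : E => (-(v : E)) + z) := by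
        funext z; abel
      rw [this, measure_preimage_add]
      exact tie_null L VL hVL hu hu0
    exact absurd this hpos.ne'
  have hcnt := Measure.countable_meas_pos_of_disjoint_iUnion (μ := volume) hmeas hdisj
  have hall : {v : ↥L | 0 < volume (As v)} = Set.univ := by
    ext v
    simp only [Set.mem_setOf_eq, Set.mem_univ, iff_true]
    have : volume (As v) = 1 := by
      rw [hAs]
      have : (fun z : E => z - (v : E)) = (fun z : E => (-(v : E)) + z) := by
        funext z; abel
      simp only [this]
      rw [measure_preimage_add]
      exact hint
    rw [this]; norm_num
  rw [hall] at hcnt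
  have : Countable ↥L := Set.countable_univ_iff.mp hcnt
  exact Set.countable_coe_iff.mp this

lemma slice_eq (L : AddSubgroup E) (VL : Set E)
    (hVL : VL = {z : E | ∀ v ∈ L, ‖z‖ ≤ ‖z - v‖})
    (hLc : (L : Set E).Countable)
    (cv : E → E) (hcvL : ∀ z, cv z ∈ L) (hcv : ∀ z, z - cv z ∈ VL) (c w : E) :
    volume ({t : E | ∃ v ∈ L, c + t - v ∈ VL ∧ c + t + w - v ∈ VL} ∩ VL)
      = volume {x : E | x ∈ VL ∧ x + w ∈ VL} := by
  haveI : Countable ↥L := Set.countable_coe_iff.mpr hLc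
  have hVLm : MeasurableSet VL := (VL_closed L VL hVL).measurableSet
  set S : Set E := {x : E | x ∈ VL ∧ x + w ∈ VL} with hS
  have hSm : MeasurableSet S := hVLm.inter (hVLm.preimage (measurable_add_const w))
  set F : ↥L → Set E := fun v => VL ∩ ((fun t => (c - (v : E)) + t) ⁻¹' S) with hF
  have hmemF : ∀ (v : ↥L) (t : E),
      t ∈ F v ↔ t ∈ VL ∧ (c + t - (v : E) ∈ VL ∧ c + t + w - (v : E) ∈ VL) := by
    intro v t
    simp only [hF, Set.mem_inter_iff, Set.mem_preimage, hS, Set.mem_setOf_eq]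
    rw [show (c - (v : E)) + t = c + t - (v : E) from by abel,
      show c + t - (v : E) + w = c + t + w - (v : E) from by abel]
  have hcover : {t : E | ∃ v ∈ L, c + t - v ∈ VL ∧ c + t + w - v ∈ VL} ∩ VL
      = ⋃ v : ↥L, F v := by
    ext t
    simp only [Set.mem_inter_iff, Set.mem_setOf_eq, Set.mem_iUnion]
    constructor
    · rintro ⟨⟨v, hvL, h1, h2⟩, htVL⟩
      exact ⟨⟨v, hvL⟩, (hmemF ⟨v, hvL⟩ t).mpr ⟨htVL, h1, h2⟩⟩
    · rintro ⟨v, hv⟩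
      obtain ⟨htVL, h1, h2⟩ := (hmemF v t).mp hv
      exact ⟨⟨v, v.2, h1, h2⟩, htVL⟩
  have hFm : ∀ v : ↥L, MeasurableSet (F v) :=
    fun v => hVLm.inter (hSm.preimage (measurable_const_add _))
  have hdisjF : Pairwise (Function.onFun (AEDisjoint volume) F) := by
    intro v v' hne
    have hu : ((v' : E) - v) ∈ L := sub_mem v'.2 v.2
    have hu0 : ((v' : E) - v) ≠ 0 := sub_ne_zero.mpr fun h => hne (Subtype.ext h.symm)
    have hsub : F v ∩ F v' ⊆
        (fun t => (c - (v : E)) + t) ⁻¹' {z : E | z ∈ VL ∧ z - ((v' : E) - v) ∈ VL} := by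
      intro t ht
      obtain ⟨h1, h2⟩ := ht
      obtain ⟨_, ha, _⟩ := (hmemF v t).mp h1
      obtain ⟨_, hb, _⟩ := (hmemF v' t).mp h2
      simp only [Set.mem_preimage, Set.mem_setOf_eq]
      constructor
      · rwa [show (c - (v : E)) + t = c + t - (v : E) from by abel]
      · rw [show (c - (v : E)) + t - ((v' : E) - v) = c + t - (v' : E) from by abel]
        exact hb
    refine measure_mono_null hsub ?_
    rw [measure_preimage_add]
    exact tie_null L VL hVL hu hu0
  set G : ↥L → Set E := fun v => S ∩ ((fun x => ((v : E) - c) + x) ⁻¹' VL) with hG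
  have hGm : ∀ v : ↥L, MeasurableSet (G v) :=
    fun v => hSm.inter (hVLm.preimage (measurable_const_add _))
  have hFG : ∀ v : ↥L, F v = (fun t => (c - (v : E)) + t) ⁻¹' (G v) := by
    intro v
    ext t
    simp only [hG, Set.mem_preimage, Set.mem_inter_iff, hF]
    rw [show ((v : E) - c) + ((c - (v : E)) + t) = t from by abel]
    exact and_comm
  have hcoverG : ⋃ v : ↥L, G v = S := by
    ext x
    simp only [Set.mem_iUnion, hG, Set.mem_inter_iff, Set.mem_preimage]
    constructor
    · rintro ⟨v, hv, _⟩; exact hv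
    · intro hx
      refine ⟨⟨-cv (x - c), neg_mem (hcvL _)⟩, hx, ?_⟩
      rw [show ((-cv (x - c) : E) - c) + x = (x - c) - cv (x - c) from by abel]
      exact hcv _
  have hdisjG : Pairwise (Function.onFun (AEDisjoint volume) G) := by
    intro v v' hne
    have hu : ((v : E) - v') ∈ L := sub_mem v.2 v'.2
    have hu0 : ((v : E) - v') ≠ 0 := sub_ne_zero.mpr fun h => hne (Subtype.ext h)
    have hsub : G v ∩ G v' ⊆
        (fun x => ((v : E) - c) + x) ⁻¹' {z : E | z ∈ VL ∧ z - ((v : E) - v') ∈ VL} := by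
      intro x hx
      obtain ⟨h1, h2⟩ := hx
      simp only [Set.mem_preimage, Set.mem_setOf_eq]
      refine ⟨h1.2, ?_⟩
      rw [show ((v : E) - c) + x - ((v : E) - v') = ((v' : E) - c) + x from by abel]
      exact h2.2
    refine measure_mono_null hsub ?_
    rw [measure_preimage_add]
    exact tie_null L VL hVL hu hu0
  calc volume ({t : E | ∃ v ∈ L, c + t - v ∈ VL ∧ c + t + w - v ∈ VL} ∩ VL)
      = volume (⋃ v : ↥L, F v) := by rw [hcover]
    _ = ∑' v : ↥L, volume (F v) :=
        measure_iUnion₀ hdisjF (fun v => (hFm v).nullMeasurableSet)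
    _ = ∑' v : ↥L, volume (G v) := by
        refine tsum_congr fun v => ?_
        rw [hFG v, measure_preimage_add]
    _ = volume (⋃ v : ↥L, G v) :=
        (measure_iUnion₀ hdisjG (fun v => (hGm v).nullMeasurableSet)).symm
    _ = volume S := by rw [hcoverG]

lemma amb_null (L : AddSubgroup E) (VL : Set E)
    (hVL : VL = {z : E | ∀ v ∈ L, ‖z‖ ≤ ‖z - v‖})
    (hLc : (L : Set E).Countable) :
    volume {z : E | ∃ v₁ ∈ L, ∃ v₂ ∈ L, v₁ ≠ v₂ ∧ z - v₁ ∈ VL ∧ z - v₂ ∈ VL} = 0 := by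
  haveI : Countable ↥L := Set.countable_coe_iff.mpr hLc
  have hcover : {z : E | ∃ v₁ ∈ L, ∃ v₂ ∈ L, v₁ ≠ v₂ ∧ z - v₁ ∈ VL ∧ z - v₂ ∈ VL}
      = ⋃ (v₁ : ↥L), ⋃ (v₂ : ↥L), ⋃ (_ : v₁ ≠ v₂),
          ({z : E | z - (v₁ : E) ∈ VL} ∩ {z : E | z - (v₂ : E) ∈ VL}) := by
    ext z
    simp only [Set.mem_setOf_eq, Set.mem_iUnion, Set.mem_inter_iff]
    constructor
    · rintro ⟨v₁, h₁, v₂, h₂, hne, ha, hb⟩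
      exact ⟨⟨v₁, h₁⟩, ⟨v₂, h₂⟩, fun h => hne (congrArg Subtype.val h), ha, hb⟩
    · rintro ⟨v₁, v₂, hne, ha, hb⟩
      exact ⟨v₁, v₁.2, v₂, v₂.2, fun h => hne (Subtype.ext h), ha, hb⟩
  rw [hcover]
  refine measure_iUnion_null fun v₁ => measure_iUnion_null fun v₂ => measure_iUnion_null fun hne => ?_
  have hu : ((v₂ : E) - v₁) ∈ L := sub_mem v₂.2 v₁.2
  have hu0 : ((v₂ : E) - v₁) ≠ 0 := sub_ne_zero.mpr fun h => hne (Subtype.ext h.symm)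
  have hsub : {z : E | z - (v₁ : E) ∈ VL} ∩ {z : E | z - (v₂ : E) ∈ VL}
      ⊆ (fun z : E => (-(v₁ : E)) + z) ⁻¹' {y : E | y ∈ VL ∧ y - ((v₂ : E) - v₁) ∈ VL} := by
    intro z hz
    obtain ⟨h1, h2⟩ := hz
    simp only [Set.mem_preimage, Set.mem_setOf_eq]
    constructor
    · rwa [show (-(v₁ : E)) + z = z - (v₁ : E) from by abel]
    · rw [show (-(v₁ : E)) + z - ((v₂ : E) - v₁) = z - (v₂ : E) from by abel]
      exact h2
  refine measure_mono_null hsub ?_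
  rw [measure_preimage_add]
  exact tie_null L VL hVL hu hu0

lemma amb_meas (L : AddSubgroup E) (VL : Set E)
    (hVLm : MeasurableSet VL) (hLc : (L : Set E).Countable) :
    MeasurableSet {z : E | ∃ v₁ ∈ L, ∃ v₂ ∈ L, v₁ ≠ v₂ ∧ z - v₁ ∈ VL ∧ z - v₂ ∈ VL} := by
  haveI : Countable ↥L := Set.countable_coe_iff.mpr hLc
  have hcover : {z : E | ∃ v₁ ∈ L, ∃ v₂ ∈ L, v₁ ≠ v₂ ∧ z - v₁ ∈ VL ∧ z - v₂ ∈ VL}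
      = ⋃ (v₁ : ↥L), ⋃ (v₂ : ↥L), ⋃ (_ : v₁ ≠ v₂),
          ({z : E | z - (v₁ : E) ∈ VL} ∩ {z : E | z - (v₂ : E) ∈ VL}) := by
    ext z
    simp only [Set.mem_setOf_eq, Set.mem_iUnion, Set.mem_inter_iff]
    constructor
    · rintro ⟨v₁, h₁, v₂, h₂, hne, ha, hb⟩
      exact ⟨⟨v₁, h₁⟩, ⟨v₂, h₂⟩, fun h => hne (congrArg Subtype.val h), ha, hb⟩
    · rintro ⟨v₁, v₂, hne, ha, hb⟩
      exact ⟨v₁, v₁.2, v₂, v₂.2, fun h => hne (Subtype.ext h), ha, hb⟩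
  rw [hcover]
  exact MeasurableSet.iUnion fun v₁ => MeasurableSet.iUnion fun v₂ =>
    MeasurableSet.iUnion fun _ =>
      (hVLm.preimage (measurable_sub_const _)).inter (hVLm.preimage (measurable_sub_const _))

lemma pi_map_comp {m : ℕ} {α : Type*} [MeasurableSpace α] (ν : Measure α) [IsProbabilityMeasure ν]
    {f : α → ℝ} (hf : Measurable f) :
    (Measure.pi fun _ : Fin m => ν).map (fun M (i : Fin m) => f (M i))
      = Measure.pi (fun _ : Fin m => ν.map f) := by
  haveI : IsProbabilityMeasure (ν.map f) := Measure.isProbabilityMeasure_map hf.aemeasurable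
  have hm : Measurable (fun (M : Fin m → α) (i : Fin m) => f (M i)) :=
    measurable_pi_lambda _ fun i => hf.comp (measurable_pi_apply i)
  refine (Measure.pi_eq fun s hs => ?_).symm
  rw [Measure.map_apply hm (MeasurableSet.univ_pi hs)]
  have hpre : (fun M (i : Fin m) => f (M i)) ⁻¹' Set.univ.pi s = Set.univ.pi fun i => f ⁻¹' s i := by
    ext M; simp [Set.mem_pi]
  rw [hpre, Measure.pi_pi]
  exact Finset.prod_congr rfl fun i _ => (Measure.map_apply hf (hs i)).symm


/-- Collision probability of the lattice-based hash `h_{M,t}(a) = CV_L(Ma + t)`, where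
`M` has i.i.d. `N(0,1/k)` entries and `t` is uniform on the Voronoi cell `V_L` of a
determinant-one lattice `L`: for `a, b` with `‖a - b‖ = Δ`,
`Pr_{M,t}[h(a) = h(b)] = Pr_{x ← Unif(V_L), y ← N(0, Δ²I_k/k)}[x + y ∈ V_L]`. -/
theorem stmt4 (k d : ℕ) (hk : 0 < k)
    (L : AddSubgroup (EuclideanSpace ℝ (Fin k)))
    (VL : Set (EuclideanSpace ℝ (Fin k)))
    (hVL : VL = {z : EuclideanSpace ℝ (Fin k) | ∀ v ∈ L, ‖z‖ ≤ ‖z - v‖})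
    (hvol : volume VL = 1)
    (cv : EuclideanSpace ℝ (Fin k) → EuclideanSpace ℝ (Fin k))
    (hcvL : ∀ z, cv z ∈ L) (hcv : ∀ z, z - cv z ∈ VL)
    (a b : EuclideanSpace ℝ (Fin d)) (Δ : ℝ) (hab : ‖a - b‖ = Δ)
    (μM : Measure (Fin k → Fin d → ℝ))
    (hμM : μM = Measure.pi fun _ : Fin k => Measure.pi fun _ : Fin d =>
      gaussianReal 0 (k : NNReal)⁻¹)
    (μy : Measure (EuclideanSpace ℝ (Fin k)))
    (hμy : μy = ((Measure.pi fun _ : Fin k => gaussianReal 0 ((Δ ^ 2 / k).toNNReal)).map (WithLp.toLp 2) :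
      Measure (EuclideanSpace ℝ (Fin k)))) :
    (μM.prod (volume.restrict VL))
        {p : (Fin k → Fin d → ℝ) × EuclideanSpace ℝ (Fin k) |
          cv ((show EuclideanSpace ℝ (Fin k) from WithLp.toLp 2 (fun i => ∑ j, p.1 i j * a j)) + p.2) =
            cv ((show EuclideanSpace ℝ (Fin k) from WithLp.toLp 2 (fun i => ∑ j, p.1 i j * b j)) + p.2)}
      = ((volume.restrict VL).prod μy)
          {p : EuclideanSpace ℝ (Fin k) × EuclideanSpace ℝ (Fin k) | p.1 + p.2 ∈ VL} := by
  subst hab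
  subst hμM
  subst hμy
  have hLc := L_countable L VL hVL hvol
  haveI : Countable ↥L := Set.countable_coe_iff.mpr hLc
  have hVLm : MeasurableSet VL := (VL_closed L VL hVL).measurableSet
  have hAmbnull := amb_null L VL hVL hLc
  have hAmbm := amb_meas L VL hVLm hLc
  -- measurability of the matrix-vector maps
  have hza : Measurable (fun M : Fin k → Fin d → ℝ =>
      (show EuclideanSpace ℝ (Fin k) from WithLp.toLp 2 (fun i => ∑ j, M i j * a j))) := by
    exact (WithLp.measurable_toLp 2 _).comp <| measurable_pi_lambda _ fun i => Finset.measurable_sum Finset.univ fun j _ =>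
      ((((measurable_pi_apply j).comp (measurable_pi_apply i) :
        Measurable fun M : Fin k → Fin d → ℝ => M i j)).mul_const (a j))
  have hzb : Measurable (fun M : Fin k → Fin d → ℝ =>
      (show EuclideanSpace ℝ (Fin k) from WithLp.toLp 2 (fun i => ∑ j, M i j * b j))) := by
    exact (WithLp.measurable_toLp 2 _).comp <| measurable_pi_lambda _ fun i => Finset.measurable_sum Finset.univ fun j _ =>
      ((((measurable_pi_apply j).comp (measurable_pi_apply i) :
        Measurable fun M : Fin k → Fin d → ℝ => M i j)).mul_const (b j))
  have hwm : Measurable (fun M : Fin k → Fin d → ℝ =>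
      (show EuclideanSpace ℝ (Fin k) from WithLp.toLp 2 (fun i => ∑ j, M i j * (b j - a j)))) := by
    exact (WithLp.measurable_toLp 2 _).comp <| measurable_pi_lambda _ fun i => Finset.measurable_sum Finset.univ fun j _ =>
      ((((measurable_pi_apply j).comp (measurable_pi_apply i) :
        Measurable fun M : Fin k → Fin d → ℝ => M i j)).mul_const (b j - a j))
  -- the measurable superset event
  set Ep : Set ((Fin k → Fin d → ℝ) × EuclideanSpace ℝ (Fin k)) :=
    {p : (Fin k → Fin d → ℝ) × EuclideanSpace ℝ (Fin k) | ∃ v ∈ L,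
      (show EuclideanSpace ℝ (Fin k) from WithLp.toLp 2 (fun i => ∑ j, p.1 i j * a j)) + p.2 - v ∈ VL ∧
      (show EuclideanSpace ℝ (Fin k) from WithLp.toLp 2 (fun i => ∑ j, p.1 i j * b j)) + p.2 - v ∈ VL} with hEp
  -- the null ambiguity event
  set N : Set ((Fin k → Fin d → ℝ) × EuclideanSpace ℝ (Fin k)) :=
    ((fun p : (Fin k → Fin d → ℝ) × EuclideanSpace ℝ (Fin k) =>
        (show EuclideanSpace ℝ (Fin k) from WithLp.toLp 2 (fun i => ∑ j, p.1 i j * a j)) + p.2) ⁻¹'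
      {z : EuclideanSpace ℝ (Fin k) | ∃ v₁ ∈ L, ∃ v₂ ∈ L, v₁ ≠ v₂ ∧ z - v₁ ∈ VL ∧ z - v₂ ∈ VL}) ∪
    ((fun p : (Fin k → Fin d → ℝ) × EuclideanSpace ℝ (Fin k) =>
        (show EuclideanSpace ℝ (Fin k) from WithLp.toLp 2 (fun i => ∑ j, p.1 i j * b j)) + p.2) ⁻¹'
      {z : EuclideanSpace ℝ (Fin k) | ∃ v₁ ∈ L, ∃ v₂ ∈ L, v₁ ≠ v₂ ∧ z - v₁ ∈ VL ∧ z - v₂ ∈ VL}) with hN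
  have hEpm : MeasurableSet Ep := by
    rw [hEp]
    have : {p : (Fin k → Fin d → ℝ) × EuclideanSpace ℝ (Fin k) | ∃ v ∈ L,
        (show EuclideanSpace ℝ (Fin k) from WithLp.toLp 2 (fun i => ∑ j, p.1 i j * a j)) + p.2 - v ∈ VL ∧
        (show EuclideanSpace ℝ (Fin k) from WithLp.toLp 2 (fun i => ∑ j, p.1 i j * b j)) + p.2 - v ∈ VL}
        = ⋃ v : ↥L,
          (((fun p : (Fin k → Fin d → ℝ) × EuclideanSpace ℝ (Fin k) =>
            (show EuclideanSpace ℝ (Fin k) from WithLp.toLp 2 (fun i => ∑ j, p.1 i j * a j)) + p.2 - (v : EuclideanSpace ℝ (Fin k))) ⁻¹' VL) ∩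
          ((fun p : (Fin k → Fin d → ℝ) × EuclideanSpace ℝ (Fin k) =>
            (show EuclideanSpace ℝ (Fin k) from WithLp.toLp 2 (fun i => ∑ j, p.1 i j * b j)) + p.2 - (v : EuclideanSpace ℝ (Fin k))) ⁻¹' VL)) := by
      ext p
      simp only [Set.mem_setOf_eq, Set.mem_iUnion, Set.mem_inter_iff, Set.mem_preimage]
      constructor
      · rintro ⟨v, hvL, h1, h2⟩; exact ⟨⟨v, hvL⟩, h1, h2⟩
      · rintro ⟨v, h1, h2⟩; exact ⟨v, v.2, h1, h2⟩
    rw [this]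
    exact MeasurableSet.iUnion fun v =>
      (hVLm.preimage (((hza.comp measurable_fst).add measurable_snd).sub measurable_const)).inter
      (hVLm.preimage (((hzb.comp measurable_fst).add measurable_snd).sub measurable_const))
  have hNm : MeasurableSet N := by
    rw [hN]
    exact (hAmbm.preimage ((hza.comp measurable_fst).add measurable_snd)).union
      (hAmbm.preimage ((hzb.comp measurable_fst).add measurable_snd))
  have hNnull : ((Measure.pi fun _ : Fin k => Measure.pi fun _ : Fin d =>
      gaussianReal 0 (k : NNReal)⁻¹).prod (volume.restrict VL)) N = 0 := by
    rw [Measure.measure_prod_null hNm]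
    refine Filter.Eventually.of_forall fun M => ?_
    show (volume.restrict VL) (Prod.mk M ⁻¹' N) = 0
    have hsub : Prod.mk M ⁻¹' N ⊆
        ((fun t : EuclideanSpace ℝ (Fin k) =>
          (show EuclideanSpace ℝ (Fin k) from WithLp.toLp 2 (fun i => ∑ j, M i j * a j)) + t) ⁻¹'
          {z : EuclideanSpace ℝ (Fin k) | ∃ v₁ ∈ L, ∃ v₂ ∈ L, v₁ ≠ v₂ ∧ z - v₁ ∈ VL ∧ z - v₂ ∈ VL}) ∪
        ((fun t : EuclideanSpace ℝ (Fin k) =>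
          (show EuclideanSpace ℝ (Fin k) from WithLp.toLp 2 (fun i => ∑ j, M i j * b j)) + t) ⁻¹'
          {z : EuclideanSpace ℝ (Fin k) | ∃ v₁ ∈ L, ∃ v₂ ∈ L, v₁ ≠ v₂ ∧ z - v₁ ∈ VL ∧ z - v₂ ∈ VL}) := by
      intro t ht
      rw [hN] at ht
      exact ht
    have hz : volume (((fun t : EuclideanSpace ℝ (Fin k) =>
          (show EuclideanSpace ℝ (Fin k) from WithLp.toLp 2 (fun i => ∑ j, M i j * a j)) + t) ⁻¹'
          {z : EuclideanSpace ℝ (Fin k) | ∃ v₁ ∈ L, ∃ v₂ ∈ L, v₁ ≠ v₂ ∧ z - v₁ ∈ VL ∧ z - v₂ ∈ VL}) ∪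
        ((fun t : EuclideanSpace ℝ (Fin k) =>
          (show EuclideanSpace ℝ (Fin k) from WithLp.toLp 2 (fun i => ∑ j, M i j * b j)) + t) ⁻¹'
          {z : EuclideanSpace ℝ (Fin k) | ∃ v₁ ∈ L, ∃ v₂ ∈ L, v₁ ≠ v₂ ∧ z - v₁ ∈ VL ∧ z - v₂ ∈ VL})) = 0 := by
      refine measure_union_null ?_ ?_ <;> rw [measure_preimage_add] <;> exact hAmbnull
    exact le_antisymm (le_trans (measure_mono hsub)
      (le_trans (Measure.restrict_apply_le _ _) (le_of_eq hz))) zero_le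
  -- sandwich argument
  have hEsub : {p : (Fin k → Fin d → ℝ) × EuclideanSpace ℝ (Fin k) |
        cv ((show EuclideanSpace ℝ (Fin k) from WithLp.toLp 2 (fun i => ∑ j, p.1 i j * a j)) + p.2) =
          cv ((show EuclideanSpace ℝ (Fin k) from WithLp.toLp 2 (fun i => ∑ j, p.1 i j * b j)) + p.2)} ⊆ Ep := by
    intro p hp
    simp only [Set.mem_setOf_eq] at hp
    rw [hEp]
    exact ⟨cv ((show EuclideanSpace ℝ (Fin k) from WithLp.toLp 2 (fun i => ∑ j, p.1 i j * a j)) + p.2),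
      hcvL _, hcv _, by rw [hp]; exact hcv _⟩
  have hNsub : Ep \ N ⊆ {p : (Fin k → Fin d → ℝ) × EuclideanSpace ℝ (Fin k) |
        cv ((show EuclideanSpace ℝ (Fin k) from WithLp.toLp 2 (fun i => ∑ j, p.1 i j * a j)) + p.2) =
          cv ((show EuclideanSpace ℝ (Fin k) from WithLp.toLp 2 (fun i => ∑ j, p.1 i j * b j)) + p.2)} := by
    rintro p ⟨hpE, hpN⟩
    rw [hEp] at hpE
    obtain ⟨v, hvL, h1, h2⟩ := hpE
    rw [hN] at hpN
    simp only [Set.mem_union, Set.mem_preimage, Set.mem_setOf_eq, not_or] at hpN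
    obtain ⟨hnA, hnB⟩ := hpN
    have hcvA : cv ((show EuclideanSpace ℝ (Fin k) from WithLp.toLp 2 (fun i => ∑ j, p.1 i j * a j)) + p.2) = v := by
      by_contra hne
      exact hnA ⟨_, hcvL _, v, hvL, hne, hcv _, h1⟩
    have hcvB : cv ((show EuclideanSpace ℝ (Fin k) from WithLp.toLp 2 (fun i => ∑ j, p.1 i j * b j)) + p.2) = v := by
      by_contra hne
      exact hnB ⟨_, hcvL _, v, hvL, hne, hcv _, h2⟩
    simp only [Set.mem_setOf_eq]
    rw [hcvA, hcvB]
  have hsand : ((Measure.pi fun _ : Fin k => Measure.pi fun _ : Fin d =>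
      gaussianReal 0 (k : NNReal)⁻¹).prod (volume.restrict VL))
      {p : (Fin k → Fin d → ℝ) × EuclideanSpace ℝ (Fin k) |
        cv ((show EuclideanSpace ℝ (Fin k) from WithLp.toLp 2 (fun i => ∑ j, p.1 i j * a j)) + p.2) =
          cv ((show EuclideanSpace ℝ (Fin k) from WithLp.toLp 2 (fun i => ∑ j, p.1 i j * b j)) + p.2)}
      = ((Measure.pi fun _ : Fin k => Measure.pi fun _ : Fin d =>
      gaussianReal 0 (k : NNReal)⁻¹).prod (volume.restrict VL)) Ep := by
    refine le_antisymm (measure_mono hEsub) ?_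
    calc ((Measure.pi fun _ : Fin k => Measure.pi fun _ : Fin d =>
          gaussianReal 0 (k : NNReal)⁻¹).prod (volume.restrict VL)) Ep
        = ((Measure.pi fun _ : Fin k => Measure.pi fun _ : Fin d =>
          gaussianReal 0 (k : NNReal)⁻¹).prod (volume.restrict VL)) (Ep \ N) :=
          (measure_diff_null hNnull).symm
      _ ≤ _ := measure_mono hNsub
  rw [hsand, Measure.prod_apply hEpm]
  -- measurability of G
  have hGval : ∀ y : EuclideanSpace ℝ (Fin k),
      volume {x : EuclideanSpace ℝ (Fin k) | x ∈ VL ∧ x + y ∈ VL}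
        = ∫⁻ x, VL.indicator (fun _ => (1:ℝ≥0∞)) x * VL.indicator (fun _ => (1:ℝ≥0∞)) (x + y) := by
    intro y
    have hrfl : {x : EuclideanSpace ℝ (Fin k) | x ∈ VL ∧ x + y ∈ VL}
        = VL ∩ ((fun x => x + y) ⁻¹' VL) := rfl
    rw [hrfl, ← lintegral_indicator_one (hVLm.inter (hVLm.preimage (measurable_add_const y)))]
    refine lintegral_congr fun x => ?_
    by_cases h1 : x ∈ VL <;> by_cases h2 : x + y ∈ VL <;>
      simp [Set.indicator, Set.mem_inter_iff, h1, h2]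
  have hGm : Measurable fun y : EuclideanSpace ℝ (Fin k) =>
      volume {x : EuclideanSpace ℝ (Fin k) | x ∈ VL ∧ x + y ∈ VL} := by
    simp only [hGval]
    apply Measurable.lintegral_prod_right (f := fun (y : EuclideanSpace ℝ (Fin k))
      (x : EuclideanSpace ℝ (Fin k)) =>
      VL.indicator (fun _ => (1:ℝ≥0∞)) x * VL.indicator (fun _ => (1:ℝ≥0∞)) (x + y))
    exact ((measurable_const.indicator hVLm).comp measurable_snd).mul
      ((measurable_const.indicator hVLm).comp (measurable_snd.add measurable_fst))
  -- the pushforward of the Gaussian matrix measure under M ↦ M(b-a)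
  have hf : Measurable (fun r : Fin d → ℝ => ∑ j, r j * (b j - a j)) :=
    Finset.measurable_sum Finset.univ fun j _ => ((measurable_pi_apply j).mul_const _)
  have hpush : (Measure.pi fun _ : Fin k => Measure.pi fun _ : Fin d =>
      gaussianReal 0 (k : NNReal)⁻¹).map
      (fun M : Fin k → Fin d → ℝ =>
        (show EuclideanSpace ℝ (Fin k) from WithLp.toLp 2 (fun i => ∑ j, M i j * (b j - a j))))
      = ((Measure.pi fun _ : Fin k => gaussianReal 0 ((‖a - b‖ ^ 2 / k).toNNReal)).map (WithLp.toLp 2) :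
          Measure (EuclideanSpace ℝ (Fin k))) := by
    have h1 := pi_map_comp (m := k) (Measure.pi fun _ : Fin d => gaussianReal 0 (k : ℝ≥0)⁻¹) hf
    have h2 : (Measure.pi fun _ : Fin d => gaussianReal 0 (k:ℝ≥0)⁻¹).map
        (fun r : Fin d → ℝ => ∑ j, r j * (b j - a j))
        = gaussianReal 0 ((‖a - b‖ ^ 2 / k).toNNReal) := by
      have hcomm : (fun r : Fin d → ℝ => ∑ j, r j * (b j - a j))
          = fun r => ∑ j, (b j - a j) * r j :=
        funext fun r => Finset.sum_congr rfl fun j _ => mul_comm _ _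
      rw [hcomm, row_sum d (fun j => b j - a j) (k:ℝ≥0)⁻¹]
      congr 1
      have hnorm : ‖a - b‖ ^ 2 = ∑ j, (b j - a j) ^ 2 := by
        rw [EuclideanSpace.norm_eq, Real.sq_sqrt (Finset.sum_nonneg fun j _ => sq_nonneg _)]
        refine Finset.sum_congr rfl fun j _ => ?_
        have : (a - b) j = a j - b j := rfl
        rw [this, Real.norm_eq_abs, sq_abs]
        ring
      rw [hnorm, div_eq_mul_inv,
        Real.toNNReal_mul (Finset.sum_nonneg fun j _ => sq_nonneg _), Real.toNNReal_inv]
      have hk : ((k:ℝ)).toNNReal = (k:ℝ≥0) := by simp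
      rw [hk]
    rw [h2] at h1
    have hmf : Measurable (fun M : Fin k → Fin d → ℝ => fun i => ∑ j, M i j * (b j - a j)) :=
      measurable_pi_lambda _ fun i => hf.comp (measurable_pi_apply i)
    rw [← h1, Measure.map_map (WithLp.measurable_toLp 2 _) hmf]
    rfl
  have hstep1 : ∫⁻ M, (volume.restrict VL) (Prod.mk M ⁻¹' Ep)
        ∂(Measure.pi fun _ : Fin k => Measure.pi fun _ : Fin d => gaussianReal 0 (k : NNReal)⁻¹)
      = ∫⁻ M, volume {x : EuclideanSpace ℝ (Fin k) | x ∈ VL ∧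
          x + (show EuclideanSpace ℝ (Fin k) from WithLp.toLp 2 (fun i => ∑ j, M i j * (b j - a j))) ∈ VL}
        ∂(Measure.pi fun _ : Fin k => Measure.pi fun _ : Fin d => gaussianReal 0 (k : NNReal)⁻¹) := by
    refine lintegral_congr fun M => ?_
    have hslm : MeasurableSet (Prod.mk M ⁻¹' Ep) := hEpm.preimage measurable_prodMk_left
    rw [Measure.restrict_apply hslm]
    have hsplit : (show EuclideanSpace ℝ (Fin k) from WithLp.toLp 2 (fun i => ∑ j, M i j * b j))
        = (show EuclideanSpace ℝ (Fin k) from WithLp.toLp 2 (fun i => ∑ j, M i j * a j))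
          + (show EuclideanSpace ℝ (Fin k) from WithLp.toLp 2 (fun i => ∑ j, M i j * (b j - a j))) := by
      ext i
      show (∑ j, M i j * b j) = (∑ j, M i j * a j) + (∑ j, M i j * (b j - a j))
      rw [← Finset.sum_add_distrib]
      exact Finset.sum_congr rfl fun j _ => by ring
    have hkey : ∀ t v : EuclideanSpace ℝ (Fin k),
        (show EuclideanSpace ℝ (Fin k) from WithLp.toLp 2 (fun i => ∑ j, M i j * a j)) + t
          + (show EuclideanSpace ℝ (Fin k) from WithLp.toLp 2 (fun i => ∑ j, M i j * (b j - a j))) - v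
        = (show EuclideanSpace ℝ (Fin k) from WithLp.toLp 2 (fun i => ∑ j, M i j * b j)) + t - v := by
      intro t v
      rw [hsplit]
      abel
    have hset : Prod.mk M ⁻¹' Ep = {t : EuclideanSpace ℝ (Fin k) | ∃ v ∈ L,
        (show EuclideanSpace ℝ (Fin k) from WithLp.toLp 2 (fun i => ∑ j, M i j * a j)) + t - v ∈ VL ∧
        (show EuclideanSpace ℝ (Fin k) from WithLp.toLp 2 (fun i => ∑ j, M i j * a j)) + t
          + (show EuclideanSpace ℝ (Fin k) from WithLp.toLp 2 (fun i => ∑ j, M i j * (b j - a j))) - v ∈ VL} := by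
      rw [hEp]
      ext t
      constructor
      · rintro ⟨v, hvL, h1, h2⟩
        refine ⟨v, hvL, h1, ?_⟩
        show _ ∈ VL
        rw [hkey t v]
        exact h2
      · rintro ⟨v, hvL, h1, h2⟩
        refine ⟨v, hvL, h1, ?_⟩
        show _ ∈ VL
        rw [← hkey t v]
        exact h2
    rw [hset]
    exact slice_eq L VL hVL hLc cv hcvL hcv _ _
  have hstep2 : ∫⁻ M, volume {x : EuclideanSpace ℝ (Fin k) | x ∈ VL ∧
          x + (show EuclideanSpace ℝ (Fin k) from WithLp.toLp 2 (fun i => ∑ j, M i j * (b j - a j))) ∈ VL}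
        ∂(Measure.pi fun _ : Fin k => Measure.pi fun _ : Fin d => gaussianReal 0 (k : NNReal)⁻¹)
      = ∫⁻ y : EuclideanSpace ℝ (Fin k),
          volume {x : EuclideanSpace ℝ (Fin k) | x ∈ VL ∧ x + y ∈ VL}
        ∂((Measure.pi fun _ : Fin k => gaussianReal 0 ((‖a - b‖ ^ 2 / k).toNNReal)).map (WithLp.toLp 2) :
          Measure (EuclideanSpace ℝ (Fin k))) := by
    have h := lintegral_map (μ := (Measure.pi fun _ : Fin k =>
      Measure.pi fun _ : Fin d => gaussianReal 0 (k : NNReal)⁻¹)) hGm hwm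
    rw [hpush] at h
    exact h.symm
  have hstep3 : (∫⁻ y : EuclideanSpace ℝ (Fin k),
          volume {x : EuclideanSpace ℝ (Fin k) | x ∈ VL ∧ x + y ∈ VL}
        ∂((Measure.pi fun _ : Fin k => gaussianReal 0 ((‖a - b‖ ^ 2 / k).toNNReal)).map (WithLp.toLp 2) :
          Measure (EuclideanSpace ℝ (Fin k))))
      = ((volume.restrict VL).prod (((Measure.pi fun _ : Fin k =>
          gaussianReal 0 ((‖a - b‖ ^ 2 / k).toNNReal)).map (WithLp.toLp 2)) : Measure (EuclideanSpace ℝ (Fin k))))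
        {p : EuclideanSpace ℝ (Fin k) × EuclideanSpace ℝ (Fin k) | p.1 + p.2 ∈ VL} := by
    have hm : MeasurableSet {p : EuclideanSpace ℝ (Fin k) × EuclideanSpace ℝ (Fin k) |
        p.1 + p.2 ∈ VL} := hVLm.preimage measurable_add
    haveI : SFinite (((Measure.pi fun _ : Fin k =>
        gaussianReal 0 ((‖a - b‖ ^ 2 / k).toNNReal)).map (WithLp.toLp 2)) : Measure (EuclideanSpace ℝ (Fin k))) :=
      inferInstance
    refine (lintegral_congr fun y : EuclideanSpace ℝ (Fin k) => ?_).trans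
      (Measure.prod_apply_symm hm).symm
    have h1 : (volume.restrict VL) ((fun x : EuclideanSpace ℝ (Fin k) => (x, y)) ⁻¹'
        {p : EuclideanSpace ℝ (Fin k) × EuclideanSpace ℝ (Fin k) | p.1 + p.2 ∈ VL})
        = volume ({x : EuclideanSpace ℝ (Fin k) | x + y ∈ VL} ∩ VL) :=
      Measure.restrict_apply (hVLm.preimage (measurable_add_const y))
    rw [h1, Set.inter_comm]
    rfl
  rw [hstep1, hstep2]
  exact hstep3.trans (by rfl)
end
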